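/- arXiv:2207.04143 — 2 statements merged into one kernel-verified Lean document; each statement's English description precedes it below -/
import Mathlib

section
/- Under the deterministic OFU setup with horizon T, if θ* ∈ C_t for every t ≤ T, then the cumulative regret satisfies Σ_{t=1}^T r_t ≤ √( 8 d β_T T log( 1 + T/γ ) ). -/
/-!
By optimism, `r_t ≤ ⟨x_t, θ̃_t⟩ - ⟨x_t, θ*⟩`, and since `θ̃_t` and `θ*` both lie in the
`A_t`-ellipsoid of radius `√β_T` around `θ̂_t`, weighted Cauchy–Schwarz bounds this by
`2 √β_T ‖x_t‖_{A_t⁻¹}`. Cauchy–Schwarz over the rounds reduces the claim to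
`Σ_t ‖x_t‖²_{A_t⁻¹} ≤ 2 d log (1 + T/γ)`. As `A_t` is diagonal and the actions are zero-one,
this sum splits over coordinates, and coordinate `i` contributes `Σ_k 1/(γ + k)` over the
rounds in which it is played; each term is at most `2 (log (γ + k + 1) - log (γ + k))`
because `u ≤ 2 log (1 + u)` for `0 ≤ u ≤ 2`, so the sum telescopes.
-/

open Matrix Finset

/-- The diagonal design matrix `A_t = γ I_d + Σ_{τ=1}^{t−1} diag(x_τ)`. -/
noncomputable def designMatrix {d : ℕ} (x : ℕ → Fin d → ℝ) (γ : ℝ) (t : ℕ) :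
    Matrix (Fin d) (Fin d) ℝ :=
  γ • (1 : Matrix (Fin d) (Fin d) ℝ) + ∑ τ ∈ Finset.Ico 1 t, Matrix.diagonal (x τ)

open Real

def designDiag {d : ℕ} (x : ℕ → Fin d → ℝ) (γ : ℝ) (t : ℕ) (i : Fin d) : ℝ :=
  γ + ∑ τ ∈ Ico 1 t, x τ i

theorem designMatrix_eq_diagonal {d : ℕ} (x : ℕ → Fin d → ℝ) (γ : ℝ) (t : ℕ) :
    designMatrix x γ t = diagonal (designDiag x γ t) := by
  ext i j
  by_cases h : i = j <;> simp [designMatrix, designDiag, Matrix.sum_apply, one_apply, h]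

theorem dotProduct_diagonal_mulVec_self {n R : Type*} [Fintype n] [DecidableEq n] [CommSemiring R]
    (m v : n → R) : v ⬝ᵥ diagonal m *ᵥ v = ∑ i, m i * v i ^ 2 := by
  simp only [dotProduct, mulVec_diagonal]
  exact sum_congr rfl fun i _ => by ring

theorem dotProduct_le_sqrt_mul_sqrt_of_pos {n : Type*} [Fintype n] {m : n → ℝ}
    (hm : ∀ i, 0 < m i) (x v : n → ℝ) :
    x ⬝ᵥ v ≤ √(∑ i, x i ^ 2 / m i) * √(∑ i, m i * v i ^ 2) := by
  have hm' : ∀ i, 0 ≤ m i := fun i => (hm i).le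
  calc x ⬝ᵥ v = ∑ i, x i / √(m i) * (√(m i) * v i) :=
        sum_congr rfl fun i _ => by field_simp [(sqrt_pos.2 (hm i)).ne']
    _ ≤ _ := sum_mul_le_sqrt_mul_sqrt _ _ _
    _ = _ := by simp only [div_pow, mul_pow, sq_sqrt, hm']

theorem dotProduct_sub_le_of_mem_ellipsoid {n : Type*} [Fintype n] [DecidableEq n]
    {m : n → ℝ} (hm : ∀ i, 0 < m i) {c θ₁ θ₂ : n → ℝ} {b : ℝ}
    (h₁ : (θ₁ - c) ⬝ᵥ diagonal m *ᵥ (θ₁ - c) ≤ b) (h₂ : (θ₂ - c) ⬝ᵥ diagonal m *ᵥ (θ₂ - c) ≤ b)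
    (x : n → ℝ) : x ⬝ᵥ θ₁ - x ⬝ᵥ θ₂ ≤ √(4 * b * ∑ i, x i ^ 2 / m i) := by
  set W := ∑ i, x i ^ 2 / m i
  rw [dotProduct_diagonal_mulVec_self] at h₁ h₂
  have hW : 0 ≤ W := sum_nonneg fun i _ => div_nonneg (sq_nonneg _) (hm i).le
  have hc₁ := dotProduct_le_sqrt_mul_sqrt_of_pos hm x (θ₁ - c)
  have hc₂ := dotProduct_le_sqrt_mul_sqrt_of_pos hm x (c - θ₂)
  have hsymm : ∑ i, m i * (c - θ₂) i ^ 2 = ∑ i, m i * (θ₂ - c) i ^ 2 :=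
    sum_congr rfl fun i _ => by simp only [Pi.sub_apply]; ring
  rw [hsymm] at hc₂
  have hsplit : x ⬝ᵥ θ₁ - x ⬝ᵥ θ₂ = x ⬝ᵥ (θ₁ - c) + x ⬝ᵥ (c - θ₂) := by
    simp only [dotProduct_sub]; ring
  have h4 : √(4 * b * W) = 2 * √W * √b := by
    rw [sqrt_mul' _ hW, sqrt_mul (by norm_num), show (4 : ℝ) = 2 ^ 2 by norm_num,
      sqrt_sq zero_le_two]
    ring
  rw [hsplit, h4]
  have hb₁ := mul_le_mul_of_nonneg_left (sqrt_le_sqrt h₁) (sqrt_nonneg W)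
  have hb₂ := mul_le_mul_of_nonneg_left (sqrt_le_sqrt h₂) (sqrt_nonneg W)
  linarith

theorem regret_le_of_optimistic {n : Type*} [Fintype n] [DecidableEq n] {m : n → ℝ}
    (hm : ∀ i, 0 < m i) {X C : Set (n → ℝ)} {c : n → ℝ} {b : ℝ}
    (hC : ∀ θ ∈ C, (θ - c) ⬝ᵥ diagonal m *ᵥ (θ - c) ≤ b) {x xstar θstar : n → ℝ}
    (hxstar : xstar ∈ X) (hθstar : θstar ∈ C)
    (hopt : ∃ θt ∈ C, ∀ x' ∈ X, ∀ θ' ∈ C, x' ⬝ᵥ θ' ≤ x ⬝ᵥ θt) :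
    xstar ⬝ᵥ θstar - x ⬝ᵥ θstar ≤ √(4 * b * ∑ i, x i ^ 2 / m i) := by
  obtain ⟨θt, hθt, hmax⟩ := hopt
  have hwidth := dotProduct_sub_le_of_mem_ellipsoid hm (hC θt hθt) (hC θstar hθstar) x
  linarith [hmax xstar hxstar θstar hθstar]

theorem sum_sqrt_le_sqrt_card_mul_sum {ι : Type*} (s : Finset ι) {f : ι → ℝ}
    (hf : ∀ i ∈ s, 0 ≤ f i) : ∑ i ∈ s, √(f i) ≤ √(#s * ∑ i ∈ s, f i) := by
  have := sum_mul_le_sqrt_mul_sqrt s (fun _ => 1) (fun i => √(f i))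
  simp only [one_mul, one_pow, sum_const, nsmul_eq_mul, mul_one] at this
  rwa [sum_congr rfl fun i hi => sq_sqrt (hf i hi), ← sqrt_mul (Nat.cast_nonneg _)] at this

theorem le_two_mul_log_one_add {u : ℝ} (h₀ : 0 ≤ u) (h₂ : u ≤ 2) : u ≤ 2 * log (1 + u) := by
  have h := le_log_one_add_of_nonneg h₀
  rw [div_le_iff₀ (by linarith)] at h
  nlinarith

theorem sum_div_add_sum_Ico_le_two_mul_log {a : ℕ → ℝ} {γ : ℝ} {N : ℕ} (hγ : 1 ≤ γ)
    (ha : ∀ t ∈ Icc 1 N, 0 ≤ a t ∧ a t ≤ 1) :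
    ∑ t ∈ Icc 1 N, a t / (γ + ∑ τ ∈ Ico 1 t, a τ) ≤ 2 * log (1 + N / γ) := by
  set S : ℕ → ℝ := fun t => γ + ∑ τ ∈ Ico 1 t, a τ with hS
  have hγS : ∀ t ≤ N + 1, γ ≤ S t := fun t ht =>
    le_add_of_nonneg_right <| sum_nonneg fun τ hτ =>
      (ha τ (by simp only [mem_Ico, mem_Icc] at hτ ⊢; omega)).1
  have hstep : ∀ t ∈ Icc 1 N, a t / S t ≤ 2 * (log (S (t + 1)) - log (S t)) := by
    intro t ht
    obtain ⟨h₁, h₂⟩ := mem_Icc.1 ht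
    have hSt : 1 ≤ S t := hγ.trans (hγS t (by omega))
    have hu : 0 ≤ a t / S t := div_nonneg (ha t ht).1 (by positivity)
    have hsucc : S (t + 1) = S t * (1 + a t / S t) := by
      rw [mul_one_add, mul_div_cancel₀ _ (by positivity)]
      simp only [hS, sum_Ico_succ_top h₁, add_assoc]
    rw [hsucc, log_mul (by positivity) (by positivity), add_sub_cancel_left]
    exact le_two_mul_log_one_add hu
      ((div_le_one (by positivity)).2 ((ha t ht).2.trans hSt) |>.trans one_le_two)
  have hend : S (N + 1) ≤ γ + N := by
    have := sum_le_card_nsmul (Ico 1 (N + 1)) a 1 fun τ hτ =>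
      (ha τ (by simp only [mem_Ico, mem_Icc] at hτ ⊢; omega)).2
    simpa [hS] using this
  have hSN : 0 < S (N + 1) := by linarith [hγS (N + 1) le_rfl]
  calc ∑ t ∈ Icc 1 N, a t / S t ≤ ∑ t ∈ Icc 1 N, 2 * (log (S (t + 1)) - log (S t)) :=
        sum_le_sum hstep
    _ = 2 * (log (S (N + 1)) - log γ) := by
        rw [← mul_sum, ← Ico_add_one_right_eq_Icc, sum_Ico_sub (fun t => log (S t)) (by omega)]
        simp [hS]
    _ ≤ 2 * log (1 + N / γ) := by
        rw [← log_div hSN.ne' (by positivity), one_add_div (by positivity)]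
        gcongr

theorem designDiag_pos {d T : ℕ} {x : ℕ → Fin d → ℝ} {γ : ℝ} (hγ : 0 < γ)
    (hx : ∀ t ∈ Icc 1 T, ∀ i, 0 ≤ x t i) {t : ℕ} (ht : t ≤ T + 1) (i : Fin d) :
    0 < designDiag x γ t i :=
  add_pos_of_pos_of_nonneg hγ <| sum_nonneg fun τ hτ =>
    hx τ (by simp only [mem_Ico, mem_Icc] at hτ ⊢; omega) i

theorem sum_sum_sq_div_designDiag_le {d T : ℕ} {x : ℕ → Fin d → ℝ} {γ : ℝ} (hγ : 1 ≤ γ)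
    (hx : ∀ t ∈ Icc 1 T, ∀ i, x t i = 0 ∨ x t i = 1) :
    ∑ t ∈ Icc 1 T, ∑ i, x t i ^ 2 / designDiag x γ t i ≤ d * (2 * log (1 + T / γ)) := by
  rw [sum_comm]
  refine (sum_le_card_nsmul univ _ (2 * log (1 + T / γ)) fun i _ => ?_).trans_eq (by simp)
  have hsq : ∀ t ∈ Icc 1 T, x t i ^ 2 = x t i := fun t ht => by
    rcases hx t ht i with h | h <;> simp [h]
  rw [sum_congr rfl fun t ht => by rw [hsq t ht]]
  exact sum_div_add_sum_Ico_le_two_mul_log hγ fun t ht => by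
    rcases hx t ht i with h | h <;> simp [h]

theorem cumulative_regret_le_general
    {d : ℕ} (γ : ℝ) (hγ : 1 ≤ γ)
    (θstar : Fin d → ℝ) (T : ℕ)
    (β : ℕ → ℝ) (hβ0 : ∀ t, 0 ≤ β t) (hβT : ∀ t, t ≤ T → β t ≤ β T)
    -- nonempty action sets of zero-one vectors and the chosen actions
    (Xset : ℕ → Set (Fin d → ℝ))
    (hX01 : ∀ t, Xset t ⊆ {v | ∀ i, v i = 0 ∨ v i = 1})
    (x : ℕ → Fin d → ℝ) (hx : ∀ t, 1 ≤ t → t ≤ T → x t ∈ Xset t)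
    -- confidence sets contained in the `A_t`-ellipsoids of radius `√β_t` around `θ̂_t`
    (θhat : ℕ → Fin d → ℝ) (C : ℕ → Set (Fin d → ℝ))
    (hC : ∀ t, C t ⊆
      {θ | (θ - θhat t) ⬝ᵥ (designMatrix x γ t).mulVec (θ - θhat t) ≤ β t})
    -- the actions are chosen optimistically
    (hopt : ∀ t, 1 ≤ t → t ≤ T →
      ∃ θt ∈ C t, ∀ x' ∈ Xset t, ∀ θ' ∈ C t, x' ⬝ᵥ θ' ≤ x t ⬝ᵥ θt)
    -- the true parameter lies in every confidence set
    (hθstar : ∀ t, 1 ≤ t → t ≤ T → θstar ∈ C t)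
    -- `xstar t` attains `max_{x ∈ X_t} ⟨x, θ*⟩`
    (xstar : ℕ → Fin d → ℝ)
    (hxstar : ∀ t, 1 ≤ t → t ≤ T →
      xstar t ∈ Xset t ∧ ∀ x' ∈ Xset t, x' ⬝ᵥ θstar ≤ xstar t ⬝ᵥ θstar) :
    ∑ t ∈ Finset.Icc 1 T, (xstar t ⬝ᵥ θstar - x t ⬝ᵥ θstar) ≤
      Real.sqrt (8 * d * β T * T * Real.log (1 + T / γ)) := by
  set w : ℕ → ℝ := fun t => ∑ i, x t i ^ 2 / designDiag x γ t i
  have hx01 : ∀ t ∈ Icc 1 T, ∀ i, x t i = 0 ∨ x t i = 1 := fun t ht =>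
    hX01 t (hx t (mem_Icc.1 ht).1 (mem_Icc.1 ht).2)
  have hdiag : ∀ t ∈ Icc 1 T, ∀ i, 0 < designDiag x γ t i := fun t ht =>
    designDiag_pos (by linarith) (fun τ hτ i => by rcases hx01 τ hτ i with h | h <;> simp [h])
      (by linarith [(mem_Icc.1 ht).2])
  have hround : ∀ t ∈ Icc 1 T, xstar t ⬝ᵥ θstar - x t ⬝ᵥ θstar ≤ √(4 * β T * w t) := by
    intro t ht
    obtain ⟨h₁, h₂⟩ := mem_Icc.1 ht
    refine regret_le_of_optimistic (hdiag t ht) (c := θhat t) (fun θ hθ => ?_)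
      (hxstar t h₁ h₂).1 (hθstar t h₁ h₂) (hopt t h₁ h₂)
    exact designMatrix_eq_diagonal x γ t ▸ (hC t hθ).trans (hβT t h₂)
  have hw : ∀ t ∈ Icc 1 T, 0 ≤ 4 * β T * w t := fun t ht =>
    mul_nonneg (by linarith [hβ0 T]) <|
      sum_nonneg fun i _ => div_nonneg (sq_nonneg _) (hdiag t ht i).le
  calc ∑ t ∈ Icc 1 T, (xstar t ⬝ᵥ θstar - x t ⬝ᵥ θstar)
      ≤ ∑ t ∈ Icc 1 T, √(4 * β T * w t) := sum_le_sum hround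
    _ ≤ √(T * ∑ t ∈ Icc 1 T, 4 * β T * w t) := by
        simpa using sum_sqrt_le_sqrt_card_mul_sum (Icc 1 T) hw
    _ ≤ √(8 * d * β T * T * log (1 + T / γ)) := by
        refine sqrt_le_sqrt ?_
        rw [← mul_sum]
        calc (T : ℝ) * (4 * β T * ∑ t ∈ Icc 1 T, w t)
            ≤ T * (4 * β T * (d * (2 * log (1 + T / γ)))) := by
              gcongr
              · linarith [hβ0 T]
              · exact sum_sum_sq_div_designDiag_le hγ hx01
          _ = 8 * d * β T * T * log (1 + T / γ) := by ring

/-- Theorem (deterministic OFU regret bound): in the deterministic OFU setup with horizon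
`T`, if `θ* ∈ C_t` for every `t ≤ T`, then the cumulative regret satisfies
`Σ_{t=1}^T r_t ≤ √(8 d β_T T log(1 + T/γ))`. -/
theorem cumulative_regret_le
    {d : ℕ} (hd : 1 ≤ d) (γ : ℝ) (hγ : 1 ≤ γ)
    (θstar : Fin d → ℝ) (T : ℕ)
    (β : ℕ → ℝ) (hβ0 : ∀ t, 0 ≤ β t) (hβT : ∀ t, t ≤ T → β t ≤ β T)
    -- nonempty action sets of zero-one vectors and the chosen actions
    (Xset : ℕ → Set (Fin d → ℝ))
    (hX01 : ∀ t, Xset t ⊆ {v | ∀ i, v i = 0 ∨ v i = 1})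
    (x : ℕ → Fin d → ℝ) (hx : ∀ t, 1 ≤ t → t ≤ T → x t ∈ Xset t)
    -- confidence sets contained in the `A_t`-ellipsoids of radius `√β_t` around `θ̂_t`
    (θhat : ℕ → Fin d → ℝ) (C : ℕ → Set (Fin d → ℝ))
    (hC : ∀ t, C t ⊆
      {θ | (θ - θhat t) ⬝ᵥ (designMatrix x γ t).mulVec (θ - θhat t) ≤ β t})
    -- the actions are chosen optimistically
    (hopt : ∀ t, 1 ≤ t → t ≤ T →
      ∃ θt ∈ C t, ∀ x' ∈ Xset t, ∀ θ' ∈ C t, x' ⬝ᵥ θ' ≤ x t ⬝ᵥ θt)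
    -- the true parameter lies in every confidence set
    (hθstar : ∀ t, 1 ≤ t → t ≤ T → θstar ∈ C t)
    -- `xstar t` attains `max_{x ∈ X_t} ⟨x, θ*⟩`
    (xstar : ℕ → Fin d → ℝ)
    (hxstar : ∀ t, 1 ≤ t → t ≤ T →
      xstar t ∈ Xset t ∧ ∀ x' ∈ Xset t, x' ⬝ᵥ θstar ≤ xstar t ⬝ᵥ θstar) :
    ∑ t ∈ Finset.Icc 1 T, (xstar t ⬝ᵥ θstar - x t ⬝ᵥ θstar) ≤
      Real.sqrt (8 * d * β T * T * Real.log (1 + T / γ)) :=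
  cumulative_regret_le_general γ hγ θstar T β hβ0 hβT Xset hX01 x hx θhat C hC hopt hθstar xstar
    hxstar
end

section
/- Fix N, M, R ≥ 1, B > 0, and 0 < α ≤ B√(NM), and let L = { Θ ∈ ℝ^{N×M} : rank(Θ) ≤ R and θ_{ui} ∈ [0,B] for all u, i }. There exists a finite set L^α ⊆ ℝ^{N×M} with cardinality |L^α| ≤ ( 9B√(NM)/α )^{(N+M+1)R} such that every Θ ∈ L is within Frobenius distance α of some element of L^α; equivalently, the α-covering number of L in the Frobenius norm satisfies log N(L, α, ‖·‖_F) ≤ (N+M+1) R log( 9B√(NM)/α ). -/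
/-!
Through the eigendecomposition of `ΘᵀΘ`, a matrix of rank at most `R` factors as `Θ = A W` with
`A ∈ ℝ^{N×R}` having orthogonal columns and `‖A‖_F ≤ ‖Θ‖_F`, and `W ∈ ℝ^{R×M}` having orthogonal
rows of length at most one. For such factors the Frobenius norm of a product splits as
`‖X Y‖_F² = ∑ⱼ ‖colⱼ X‖² ‖rowⱼ Y‖²`, so in `Θ - A'W' = (A - A')W + A'(W - W')` the first term is
at most `‖A - A'‖_F` and the second at most `‖A'‖_F · maxⱼ ‖rowⱼ (W - W')‖`. Taking an `α/2`-net of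
the admissible `A` of norm at most `D = B√(NM)` and an `α/(2D)`-net of the rows of `W`, both of
size `(4D/α + 1)^{dim}` by the volume bound on separated subsets of a ball, gives
`(4D/α + 1)^{(N+M)R} ≤ (9D/α)^{(N+M+1)R}` points.
-/

open Finset

/-- Frobenius norm of a real matrix, `‖Θ‖_F = √(Σ_{u,i} θ_{ui}²)`. -/
noncomputable def frobNorm {N M : ℕ} (Θ : Matrix (Fin N) (Fin M) ℝ) : ℝ :=
  Real.sqrt (∑ u, ∑ i, Θ u i ^ 2)

open Metric MeasureTheory Module Matrix
open scoped ENNReal NNReal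

attribute [local instance] Matrix.frobeniusNormedAddCommGroup Matrix.frobeniusNormedSpace

section Packing

variable {E : Type*} [NormedAddCommGroup E] [NormedSpace ℝ E] [FiniteDimensional ℝ E]

theorem card_le_of_subset_closedBall_of_pairwise_lt_dist {T : Finset E} {r ε : ℝ}
    (hr : 0 ≤ r) (hε : 0 < ε) (hT : (T : Set E) ⊆ closedBall 0 r)
    (hsep : (T : Set E).Pairwise fun x y => ε < dist x y) :
    (T.card : ℝ) ≤ (2 * r / ε + 1) ^ finrank ℝ E := by
  borelize E
  let μ : Measure E := Measure.addHaar
  have hdisj : (T : Set E).PairwiseDisjoint (ball · (ε / 2)) := fun x hx y hy hxy =>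
    ball_disjoint_ball (by linarith [hsep hx hy hxy])
  have hsub : ⋃ x ∈ T, ball x (ε / 2) ⊆ ball 0 (r + ε / 2) :=
    Set.iUnion₂_subset fun x hx => ball_subset_ball' (by linarith [mem_closedBall.1 (hT hx)])
  have hvol : (T.card : ℝ≥0∞) * ENNReal.ofReal ((ε / 2) ^ finrank ℝ E) * μ (ball 0 1) ≤
      ENNReal.ofReal ((r + ε / 2) ^ finrank ℝ E) * μ (ball 0 1) :=
    calc (T.card : ℝ≥0∞) * ENNReal.ofReal ((ε / 2) ^ finrank ℝ E) * μ (ball 0 1)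
        = μ (⋃ x ∈ T, ball x (ε / 2)) := by
          rw [measure_biUnion_finset hdisj fun x _ => measurableSet_ball]
          simp only [μ.addHaar_ball_of_pos _ (half_pos hε), Finset.sum_const, nsmul_eq_mul,
            mul_assoc]
      _ ≤ μ (ball 0 (r + ε / 2)) := measure_mono hsub
      _ = ENNReal.ofReal ((r + ε / 2) ^ finrank ℝ E) * μ (ball 0 1) :=
          μ.addHaar_ball_of_pos _ (by positivity)
  have hcancel := (ENNReal.mul_le_mul_iff_left (measure_ball_pos μ _ one_pos).ne'
    measure_ball_lt_top.ne).1 hvol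
  have hreal : (T.card : ℝ) * (ε / 2) ^ finrank ℝ E ≤ (r + ε / 2) ^ finrank ℝ E := by
    simpa [ENNReal.toReal_mul, ENNReal.toReal_ofReal (by positivity : 0 ≤ (ε / 2) ^ finrank ℝ E)]
      using ENNReal.toReal_le_of_le_ofReal (by positivity) hcancel
  calc (T.card : ℝ) ≤ (r + ε / 2) ^ finrank ℝ E / (ε / 2) ^ finrank ℝ E := by
        rwa [le_div_iff₀ (by positivity)]
    _ = (2 * r / ε + 1) ^ finrank ℝ E := by
        rw [← div_pow]
        congr 1
        field_simp

theorem encard_le_of_isSeparated_of_subset_closedBall {C : Set E} {r : ℝ} {ε : ℝ≥0}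
    (hr : 0 ≤ r) (hε : 0 < ε) (hC : C ⊆ closedBall 0 r) (hsep : IsSeparated (ε : ℝ≥0∞) C) :
    C.encard ≤ ⌊(2 * r / ε + 1) ^ finrank ℝ E⌋₊ := by
  by_contra! hlt
  obtain ⟨t, htC, htcard⟩ := Set.exists_subset_encard_eq (Order.add_one_le_of_lt hlt)
  have htfin : t.Finite := Set.finite_of_encard_eq_coe htcard
  have hcard := card_le_of_subset_closedBall_of_pairwise_lt_dist hr (NNReal.coe_pos.2 hε)
    (T := htfin.toFinset)
    (by simpa using htC.trans hC)
    (by simpa [IsSeparated, Set.Pairwise, edist_dist] using hsep.mono htC)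
  rw [htfin.encard_eq_coe_toFinset_card] at htcard
  norm_cast at htcard
  rw [htcard, Nat.cast_add_one] at hcard
  exact (Nat.lt_floor_add_one _).not_ge hcard

theorem exists_finset_net_of_subset_closedBall {S : Set E} {r ε : ℝ} (hr : 0 ≤ r) (hε : 0 < ε)
    (hS : S ⊆ closedBall 0 r) :
    ∃ T : Finset E, (T : Set E) ⊆ S ∧ (T.card : ℝ) ≤ (2 * r / ε + 1) ^ finrank ℝ E ∧
      ∀ x ∈ S, ∃ y ∈ T, dist x y ≤ ε := by
  lift ε to ℝ≥0 using hε.le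
  have hε' : 0 < ε := hε
  have hpack : packingNumber ε S ≠ ⊤ := ne_top_of_le_ne_top (ENat.natCast_ne_top _) <|
    iSup₂_le fun C hCS => iSup_le fun hsep =>
      encard_le_of_isSeparated_of_subset_closedBall hr hε' (hCS.trans hS) hsep
  have hfin : (maximalSeparatedSet ε S).Finite := Set.finite_of_encard_le_coe <|
    encard_le_of_isSeparated_of_subset_closedBall hr hε' (maximalSeparatedSet_subset.trans hS)
      isSeparated_maximalSeparatedSet
  have hsub : maximalSeparatedSet ε S ⊆ S := maximalSeparatedSet_subset
  refine ⟨hfin.toFinset, by simpa using hsub, ?_, fun x hx => ?_⟩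
  · exact card_le_of_subset_closedBall_of_pairwise_lt_dist hr hε (by simpa using hsub.trans hS)
      (by simpa [IsSeparated, Set.Pairwise, edist_dist] using
        (isSeparated_maximalSeparatedSet : IsSeparated (ε : ℝ≥0∞) (maximalSeparatedSet ε S)))
  · obtain ⟨y, hy, hxy⟩ := isCover_maximalSeparatedSet hpack hx
    exact ⟨y, by simpa using hy, by simpa [edist_dist] using hxy⟩

end Packing

section Matrix

theorem Matrix.exists_partialPerm {n κ : Type*} [Fintype n] [Fintype κ] [DecidableEq n]
    (p : n → Prop) [DecidablePred p] (h : Fintype.card {k // p k} ≤ Fintype.card κ) :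
    ∃ Q : Matrix κ n ℝ, Qᵀ * Q = diagonal (fun k => if p k then 1 else 0) ∧
      (∀ d : n → ℝ, (Q * diagonal d * Qᵀ).IsDiag) ∧ ∀ j, (Q * Qᵀ) j j ≤ 1 := by
  classical
  obtain ⟨e⟩ := Function.Embedding.nonempty_of_card_le h
  let Q : Matrix κ n ℝ :=
    Matrix.of fun j k => if h : p k then (if e ⟨k, h⟩ = j then 1 else 0) else 0
  have hcol : ∀ j j' k, j ≠ j' → Q j k * Q j' k = 0 := by
    intro j j' k hjj'
    simp only [Q, of_apply]
    grind
  refine ⟨Q, ?_, fun d j j' hjj' => ?_, fun j => ?_⟩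
  · ext k k'
    by_cases hk : p k <;> by_cases hk' : p k' <;> simp [Q, hk, hk', mul_apply, diagonal_apply]
    rintro rfl; exact hk' hk
  · show (Q * diagonal d * Qᵀ) j j' = 0
    rw [mul_apply]
    simp only [mul_diagonal, transpose_apply]
    exact Finset.sum_eq_zero fun k _ => by rw [mul_right_comm, hcol j j' k hjj', zero_mul]
  · by_cases hj : ∃ t, e t = j
    · obtain ⟨t, rfl⟩ := hj
      have : ∀ k, Q (e t) k = if k = t.1 then 1 else 0 := by
        intro k
        by_cases hk : p k
        · simp [Q, hk, Subtype.ext_iff]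
        · simp only [Q, of_apply, hk, dite_false]
          exact (if_neg fun h : k = t.1 => hk (h ▸ t.2)).symm
      simp [mul_apply, this]
    · push Not at hj
      have : ∀ k, Q j k = 0 := fun k => by by_cases hk : p k <;> simp [Q, hk, hj]
      simp [mul_apply, this]

theorem Matrix.transpose_mul_self_apply_self_nonneg {m n : Type*} [Fintype m]
    (X : Matrix m n ℝ) (j : n) : 0 ≤ (Xᵀ * X) j j :=
  Finset.sum_nonneg fun i _ => mul_self_nonneg (X i j)

theorem Matrix.mul_transpose_self_apply_self {m n : Type*} [Fintype n] (X : Matrix m n ℝ)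
    (j : m) : (X * Xᵀ) j j = ‖WithLp.toLp 2 (X j)‖ ^ 2 := by
  rw [EuclideanSpace.norm_sq_eq]
  simp [mul_apply, sq]

variable {l m n : Type*} [Fintype l] [Fintype m] [Fintype n]

theorem Matrix.frobenius_norm_eq_sqrt (X : Matrix m n ℝ) : ‖X‖ = √(∑ i, ∑ j, X i j ^ 2) := by
  simp [frobenius_norm_def, Real.sqrt_eq_rpow]

theorem frobNorm_eq_norm {N M : ℕ} (Θ : Matrix (Fin N) (Fin M) ℝ) : frobNorm Θ = ‖Θ‖ :=
  (frobenius_norm_eq_sqrt Θ).symm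

theorem Matrix.frobenius_norm_sq_eq_trace (X : Matrix m n ℝ) : ‖X‖ ^ 2 = trace (Xᵀ * X) := by
  rw [frobenius_norm_eq_sqrt, Real.sq_sqrt (by positivity), Finset.sum_comm]
  simp [trace, mul_apply, sq]

theorem Matrix.frobenius_norm_mul_sq (X : Matrix l m ℝ) (Y : Matrix m n ℝ) :
    ‖X * Y‖ ^ 2 = trace (Xᵀ * X * (Y * Yᵀ)) := by
  rw [frobenius_norm_sq_eq_trace, transpose_mul, Matrix.mul_assoc, trace_mul_comm,
    Matrix.mul_assoc, Matrix.mul_assoc, Matrix.mul_assoc]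

theorem Matrix.IsDiag.trace_mul_eq {G H : Matrix m m ℝ} (hG : G.IsDiag) :
    trace (G * H) = ∑ j, G j j * H j j := by
  simp only [trace, diag, mul_apply]
  exact Finset.sum_congr rfl fun j _ =>
    Finset.sum_eq_single j (fun k _ hkj => by rw [hG hkj.symm, zero_mul]) (by simp)

theorem Matrix.frobenius_norm_mul_le_of_isDiag_right (X : Matrix l m ℝ) {Y : Matrix m n ℝ}
    (hY : (Y * Yᵀ).IsDiag) (hY1 : ∀ j, (Y * Yᵀ) j j ≤ 1) : ‖X * Y‖ ≤ ‖X‖ := by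
  rw [← pow_le_pow_iff_left₀ (norm_nonneg _) (norm_nonneg _) two_ne_zero, frobenius_norm_mul_sq,
    trace_mul_comm, hY.trace_mul_eq, frobenius_norm_sq_eq_trace, trace]
  exact Finset.sum_le_sum fun j _ =>
    mul_le_of_le_one_left (transpose_mul_self_apply_self_nonneg X j) (hY1 j)

theorem Matrix.frobenius_norm_mul_le_of_isDiag_left {X : Matrix l m ℝ} (Y : Matrix m n ℝ)
    (hX : (Xᵀ * X).IsDiag) {c : ℝ} (hc : 0 ≤ c) (hY : ∀ j, (Y * Yᵀ) j j ≤ c ^ 2) :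
    ‖X * Y‖ ≤ ‖X‖ * c := by
  rw [← pow_le_pow_iff_left₀ (norm_nonneg _) (by positivity) two_ne_zero, frobenius_norm_mul_sq,
    hX.trace_mul_eq, mul_pow, frobenius_norm_sq_eq_trace, trace, Finset.sum_mul]
  exact Finset.sum_le_sum fun j _ =>
    mul_le_mul_of_nonneg_left (hY j) (transpose_mul_self_apply_self_nonneg X j)

theorem Matrix.mul_diagonal_indicator_eq_self (X : Matrix m n ℝ) [DecidableEq n] (p : n → Prop)
    [DecidablePred p] (h : ∀ k, ¬p k → (Xᵀ * X) k k = 0) :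
    X * diagonal (fun k => if p k then (1 : ℝ) else 0) = X := by
  ext u k
  by_cases hk : p k
  · simp [hk]
  · have hcol :=
      (Finset.sum_eq_zero_iff_of_nonneg fun i _ => mul_self_nonneg (X i k)).1 (h k hk) u
    simp_all

theorem Matrix.exists_mul_eq_of_rank_le {κ : Type*} [Fintype κ] (Θ : Matrix m n ℝ)
    (h : Θ.rank ≤ Fintype.card κ) :
    ∃ (A : Matrix m κ ℝ) (W : Matrix κ n ℝ), Θ = A * W ∧ (Aᵀ * A).IsDiag ∧ (W * Wᵀ).IsDiag ∧
      (∀ j, (W * Wᵀ) j j ≤ 1) ∧ ‖A‖ ≤ ‖Θ‖ := by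
  classical
  have hG : (Θᵀ * Θ).IsHermitian := by
    simpa [conjTranspose_eq_transpose_of_trivial] using isHermitian_conjTranspose_mul_self Θ
  set U : Matrix n n ℝ := (hG.eigenvectorUnitary : Matrix n n ℝ)
  have hUU : Uᵀ * U = 1 := by
    simpa [U, star_eq_conjTranspose, conjTranspose_eq_transpose_of_trivial] using
      Unitary.coe_star_mul_self hG.eigenvectorUnitary
  have hUU' : U * Uᵀ = 1 := by
    simpa [U, star_eq_conjTranspose, conjTranspose_eq_transpose_of_trivial] using
      Unitary.coe_mul_star_self hG.eigenvectorUnitary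
  have hD : (Θ * U)ᵀ * (Θ * U) = diagonal hG.eigenvalues := by
    simpa [U, Unitary.conjStarAlgAut_star_apply, star_eq_conjTranspose,
      conjTranspose_eq_transpose_of_trivial, transpose_mul, Matrix.mul_assoc] using
      hG.conjStarAlgAut_star_eigenvectorUnitary
  obtain ⟨Q, hQQ, hQdiag, hQ1⟩ := exists_partialPerm (κ := κ) (fun k => hG.eigenvalues k ≠ 0)
    (by rwa [← hG.rank_eq_card_non_zero_eigs, rank_transpose_mul_self])
  have hΘU : Θ * U * diagonal (fun k => if hG.eigenvalues k ≠ 0 then (1 : ℝ) else 0) = Θ * U :=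
    mul_diagonal_indicator_eq_self _ _ fun k hk => by rw [hD, diagonal_apply_eq]; simpa using hk
  have hW : Q * Uᵀ * (Q * Uᵀ)ᵀ = Q * Qᵀ := by
    rw [transpose_mul, transpose_transpose, Matrix.mul_assoc, ← Matrix.mul_assoc Uᵀ, hUU,
      Matrix.one_mul]
  -- The columns of `Θ * U` are orthogonal, and zero exactly at the zero eigenvalues;
  -- `Q` moves the other ones into `κ`.
  refine ⟨Θ * U * Qᵀ, Q * Uᵀ, ?_, ?_, by rw [hW]; simpa using hQdiag (fun _ => 1), fun j => ?_,
    ?_⟩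
  · calc Θ = Θ * U * Uᵀ := by rw [Matrix.mul_assoc, hUU', Matrix.mul_one]
      _ = Θ * U * (Qᵀ * Q) * Uᵀ := by rw [hQQ, hΘU]
      _ = Θ * U * Qᵀ * (Q * Uᵀ) := by simp only [Matrix.mul_assoc]
  · rw [transpose_mul, transpose_transpose, Matrix.mul_assoc, ← Matrix.mul_assoc _ (Θ * U), hD,
      ← Matrix.mul_assoc]
    exact hQdiag _
  · exact hW ▸ hQ1 j
  · calc ‖Θ * U * Qᵀ‖ ≤ ‖Θ * U‖ := frobenius_norm_mul_le_of_isDiag_right _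
          (by rw [transpose_transpose, hQQ]; exact isDiag_diagonal _)
          (fun k => by rw [transpose_transpose, hQQ, diagonal_apply_eq]; split_ifs <;> norm_num)
      _ ≤ ‖Θ‖ := frobenius_norm_mul_le_of_isDiag_right _ (by rw [hUU']; exact isDiag_one)
          (fun k => by rw [hUU', one_apply_eq])

theorem Matrix.frobenius_norm_le_of_abs_le (X : Matrix m n ℝ) {B : ℝ} (hB : 0 ≤ B)
    (h : ∀ i j, |X i j| ≤ B) : ‖X‖ ≤ B * √(Fintype.card m * Fintype.card n) := by
  rw [frobenius_norm_eq_sqrt, ← Real.sqrt_sq hB, ← Real.sqrt_mul (sq_nonneg B)]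
  refine Real.sqrt_le_sqrt ?_
  calc ∑ i, ∑ j, X i j ^ 2 ≤ ∑ _i : m, ∑ _j : n, B ^ 2 :=
        Finset.sum_le_sum fun i _ => Finset.sum_le_sum fun j _ =>
          sq_le_sq' (abs_le.1 (h i j)).1 (abs_le.1 (h i j)).2
    _ = B ^ 2 * (Fintype.card m * Fintype.card n) := by simp; ring

theorem Matrix.norm_mul_sub_mul_le {κ : Type*} [Fintype κ] {A A' : Matrix m κ ℝ}
    {W W' : Matrix κ n ℝ} (hW : (W * Wᵀ).IsDiag) (hW1 : ∀ j, (W * Wᵀ) j j ≤ 1)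
    (hA' : (A'ᵀ * A').IsDiag) {c : ℝ} (hc : 0 ≤ c)
    (hWW' : ∀ j, ((W - W') * (W - W')ᵀ) j j ≤ c ^ 2) :
    ‖A * W - A' * W'‖ ≤ ‖A - A'‖ + ‖A'‖ * c := by
  calc ‖A * W - A' * W'‖ = ‖(A - A') * W + A' * (W - W')‖ := by
        rw [Matrix.sub_mul, Matrix.mul_sub]; abel_nf
    _ ≤ ‖A - A'‖ + ‖A'‖ * c := norm_add_le_of_le
        (frobenius_norm_mul_le_of_isDiag_right _ hW hW1)
        (frobenius_norm_mul_le_of_isDiag_left _ hA' hc hWW')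

theorem Matrix.exists_rowwise_net (κ : Type*) [Fintype κ] {ε : ℝ} (hε : 0 < ε) :
    ∃ T : Finset (Matrix κ n ℝ), (T.card : ℝ) ≤ (2 / ε + 1) ^ (Fintype.card κ * Fintype.card n) ∧
      ∀ W : Matrix κ n ℝ, (∀ j, (W * Wᵀ) j j ≤ 1) →
        ∃ W' ∈ T, ∀ j, ((W - W') * (W - W')ᵀ) j j ≤ ε ^ 2 := by
  classical
  obtain ⟨T, -, hTcard, hTnet⟩ := exists_finset_net_of_subset_closedBall zero_le_one hε
    (subset_refl (closedBall (0 : κ → EuclideanSpace ℝ n) 1))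
  let toMatrix (w : κ → EuclideanSpace ℝ n) : Matrix κ n ℝ := Matrix.of fun j => (w j).ofLp
  refine ⟨T.image toMatrix, ?_, fun W hW => ?_⟩
  · calc ((T.image toMatrix).card : ℝ) ≤ T.card := by exact_mod_cast card_image_le
      _ ≤ _ := by simpa [finrank_pi_fintype] using hTcard
  · obtain ⟨w', hw'T, hww'⟩ := hTnet (fun j => WithLp.toLp 2 (W j)) <|
      mem_closedBall_zero_iff.2 <| (pi_norm_le_iff_of_nonneg zero_le_one).2 fun j => by
        have := hW j
        rw [mul_transpose_self_apply_self] at this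
        exact (sq_le_one_iff₀ (norm_nonneg _)).1 this
    refine ⟨toMatrix w', mem_image_of_mem _ hw'T, fun j => ?_⟩
    rw [mul_transpose_self_apply_self]
    gcongr
    calc ‖WithLp.toLp 2 ((W - toMatrix w') j)‖ = dist (WithLp.toLp 2 (W j)) (w' j) := by
          rw [dist_eq_norm]; rfl
      _ ≤ _ := dist_le_pi_dist (fun j => WithLp.toLp 2 (W j)) w' j
      _ ≤ ε := hww'

theorem Matrix.exists_lowRank_net (R : ℕ) {D δ : ℝ} (hδ : 0 < δ) (hD : 0 < D) :
    ∃ L : Finset (Matrix m n ℝ),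
      (L.card : ℝ) ≤ (4 * D / δ + 1) ^ ((Fintype.card m + Fintype.card n) * R) ∧
      ∀ Θ : Matrix m n ℝ, Θ.rank ≤ R → ‖Θ‖ ≤ D → ∃ Θ' ∈ L, ‖Θ - Θ'‖ ≤ δ := by
  classical
  set S : Set (Matrix m (Fin R) ℝ) := {A | (Aᵀ * A).IsDiag ∧ ‖A‖ ≤ D}
  obtain ⟨TA, hTAS, hTAcard, hTAnet⟩ := exists_finset_net_of_subset_closedBall hD.le (half_pos hδ)
    (show S ⊆ closedBall 0 D from fun A hA => mem_closedBall_zero_iff.2 hA.2)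
  obtain ⟨TW, hTWcard, hTWnet⟩ :=
    exists_rowwise_net (n := n) (Fin R) (by positivity : 0 < δ / (2 * D))
  refine ⟨(TA ×ˢ TW).image fun p => p.1 * p.2, ?_, fun Θ hrank hΘ => ?_⟩
  · have hA : (TA.card : ℝ) ≤ (4 * D / δ + 1) ^ (Fintype.card m * R) := by
      convert hTAcard using 2
      · field_simp; ring
      · simp [finrank_matrix]
    have hW : (TW.card : ℝ) ≤ (4 * D / δ + 1) ^ (R * Fintype.card n) := by
      convert hTWcard using 2
      · field_simp; ring
      · simp
    calc ((TA ×ˢ TW).image fun p => p.1 * p.2).card ≤ (TA.card * TW.card : ℝ) := by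
          rw [← Nat.cast_mul, ← card_product]; exact_mod_cast card_image_le
      _ ≤ (4 * D / δ + 1) ^ (Fintype.card m * R) * (4 * D / δ + 1) ^ (R * Fintype.card n) :=
          mul_le_mul hA hW (by positivity) (by positivity)
      _ = _ := by rw [← pow_add]; ring_nf
  · obtain ⟨A, W, rfl, hA, hW, hW1, hAΘ⟩ :=
      exists_mul_eq_of_rank_le Θ (κ := Fin R) (by simpa using hrank)
    obtain ⟨A', hA'T, hAA'⟩ := hTAnet A ⟨hA, hAΘ.trans hΘ⟩
    obtain ⟨W', hW'T, hWW'⟩ := hTWnet W hW1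
    have hA'S : A' ∈ S := hTAS hA'T
    refine ⟨A' * W', mem_image.2 ⟨(A', W'), mem_product.2 ⟨hA'T, hW'T⟩, rfl⟩, ?_⟩
    calc ‖A * W - A' * W'‖ ≤ ‖A - A'‖ + ‖A'‖ * (δ / (2 * D)) :=
          norm_mul_sub_mul_le hW hW1 hA'S.1 (by positivity) hWW'
      _ ≤ δ / 2 + D * (δ / (2 * D)) :=
          add_le_add (by rwa [← dist_eq_norm]) (by gcongr; exact hA'S.2)
      _ = δ := by field_simp; ring

end Matrix

theorem low_rank_structure_set_covering_general
    (N M R : ℕ)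
    (B α : ℝ) (hα0 : 0 < α) (hα1 : α ≤ B * Real.sqrt (N * M)) :
    ∃ Lα : Finset (Matrix (Fin N) (Fin M) ℝ),
      (Lα.card : ℝ) ≤ (9 * B * Real.sqrt (N * M) / α) ^ ((N + M + 1) * R) ∧
      ∀ Θ : Matrix (Fin N) (Fin M) ℝ, Θ.rank ≤ R →
        (∀ u i, Θ u i ∈ Set.Icc (0 : ℝ) B) →
        ∃ Θ' ∈ Lα, frobNorm (Θ - Θ') ≤ α := by
  set D := B * √(N * M) with hD_def
  have hD : 0 < D := hα0.trans_le hα1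
  have hB : 0 ≤ B := (pos_of_mul_pos_left hD (Real.sqrt_nonneg _)).le
  have hDα : 1 ≤ D / α := (one_le_div hα0).2 hα1
  obtain ⟨L, hLcard, hLnet⟩ := exists_lowRank_net (m := Fin N) (n := Fin M) R hα0 hD
  refine ⟨L, hLcard.trans ?_, fun Θ hrank hΘ => ?_⟩
  · rw [Fintype.card_fin, Fintype.card_fin]
    calc (4 * D / α + 1) ^ ((N + M) * R) ≤ (9 * (D / α)) ^ ((N + M) * R) := by
          gcongr; linarith [mul_div_assoc 4 D α]
      _ ≤ (9 * (D / α)) ^ ((N + M + 1) * R) :=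
          pow_le_pow_right₀ (by linarith) (Nat.mul_le_mul_right R (Nat.le_succ _))
      _ = (9 * B * √(N * M) / α) ^ ((N + M + 1) * R) := by rw [hD_def]; ring
  · obtain ⟨Θ', hΘ'L, hΘΘ'⟩ := hLnet Θ hrank <| by
      simpa only [Fintype.card_fin] using frobenius_norm_le_of_abs_le Θ hB fun u i =>
        abs_le.2 ⟨by linarith [(hΘ u i).1], (hΘ u i).2⟩
    exact ⟨Θ', hΘ'L, by rwa [frobNorm_eq_norm]⟩

/-- Lemma 14 of the paper (covering number for low-rank matrices): for the structure set
`L = {Θ ∈ ℝ^{N×M} : rank Θ ≤ R, θ_{ui} ∈ [0,B]}` and `0 < α ≤ B√(NM)`, there is an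
`α`-net `L^α` of `L` in the Frobenius norm with `|L^α| ≤ (9B√(NM)/α)^{(N+M+1)R}`;
equivalently `log N(L, α, ‖·‖_F) ≤ (N+M+1) R log(9B√(NM)/α)`. -/
theorem low_rank_structure_set_covering
    (N M R : ℕ) (hN : 1 ≤ N) (hM : 1 ≤ M) (hR : 1 ≤ R)
    (B α : ℝ) (hB : 0 < B) (hα0 : 0 < α) (hα1 : α ≤ B * Real.sqrt (N * M)) :
    ∃ Lα : Finset (Matrix (Fin N) (Fin M) ℝ),
      (Lα.card : ℝ) ≤ (9 * B * Real.sqrt (N * M) / α) ^ ((N + M + 1) * R) ∧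
      ∀ Θ : Matrix (Fin N) (Fin M) ℝ, Θ.rank ≤ R →
        (∀ u i, Θ u i ∈ Set.Icc (0 : ℝ) B) →
        ∃ Θ' ∈ Lα, frobNorm (Θ - Θ') ≤ α :=
  low_rank_structure_set_covering_general N M R B α hα0 hα1
end
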